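/- arXiv:1504.01646 — 5 statements merged into one kernel-verified Lean document; each statement's English description precedes it below -/
import Mathlib

section
/- Let I = {0,…,M} be partitioned into two disjoint subsets L = {l₁ > … > l_N} and K = {k₁ > … > k_m} with N + m = M + 1. Writing V(x₁,…,x_n) = ∏_{i<j}(x_i - x_j) for the Vandermonde, one has V(l₁,…,l_N) = (0! · 1! · ⋯ · M!) · V(k₁,…,k_m) / ∏_{j=1}^m (k_j! · (M - k_j)!). -/
/-!
Write `gapProd s t` for the product of `a - b` over `a ∈ s`, `b ∈ t` with `b < a`. It is
multiplicative in each argument over disjoint unions, `gapProd s s` is the Vandermonde of `s`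
listed decreasingly, and for `U = {0,…,M}` one has `gapProd {a} U = a!` and
`gapProd U {a} = (M - a)!`. Expanding over `U = L ⊔ K`, both `0! ⋯ M! · V(K) = gapProd U U · V(K)`
and `V(L) · ∏ₖ k! (M - k)! = V(L) · gapProd K U · gapProd U K` become the same product of
`gapProd X Y` with `X, Y ∈ {L, K}`.
-/

open Finset
open scoped Nat

section GapProd

variable (R : Type*) [CommRing R]

def gapProd (s t : Finset ℕ) : R :=
  ∏ a ∈ s, ∏ b ∈ t with b < a, ((a : R) - b)

variable {R}

theorem gapProd_union_left {s₁ s₂ : Finset ℕ} (h : Disjoint s₁ s₂) (t : Finset ℕ) :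
    gapProd R (s₁ ∪ s₂) t = gapProd R s₁ t * gapProd R s₂ t :=
  prod_union h

theorem gapProd_union_right (s : Finset ℕ) {t₁ t₂ : Finset ℕ} (h : Disjoint t₁ t₂) :
    gapProd R s (t₁ ∪ t₂) = gapProd R s t₁ * gapProd R s t₂ := by
  simp only [gapProd, filter_union, ← prod_mul_distrib]
  exact prod_congr rfl fun a _ => prod_union (disjoint_filter_filter h)

theorem gapProd_eq_prod_singleton_right (s t : Finset ℕ) :
    gapProd R s t = ∏ b ∈ t, gapProd R s {b} := by
  simp only [gapProd, prod_filter, prod_singleton]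
  exact prod_comm

theorem gapProd_singleton_right (s : Finset ℕ) (b : ℕ) :
    gapProd R s {b} = ∏ a ∈ s with b < a, ((a : R) - b) := by
  rw [gapProd, prod_filter]
  refine prod_congr rfl fun a _ => ?_
  split_ifs with h
  · rw [filter_singleton, if_pos h, prod_singleton]
  · rw [filter_singleton, if_neg h, prod_empty]

theorem gapProd_range_right {n : ℕ} {s : Finset ℕ} (hs : s ⊆ range n) :
    gapProd R s (range n) = ∏ a ∈ s, (a ! : R) := by
  refine prod_congr rfl fun a ha => ?_
  have hlt : a < n := mem_range.mp (hs ha)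
  have hfilter : {b ∈ range n | b < a} = range a := by
    ext b
    simp only [mem_filter, mem_range]
    omega
  rw [hfilter, ← Nat.descFactorial_self, Nat.descFactorial_eq_prod_range, Nat.cast_prod]
  exact prod_congr rfl fun b hb => (Nat.cast_sub (mem_range.mp hb).le).symm

theorem gapProd_range_left {M : ℕ} {s : Finset ℕ} (hs : s ⊆ range (M + 1)) :
    gapProd R (range (M + 1)) s = ∏ a ∈ s, ((M - a) ! : R) := by
  rw [gapProd_eq_prod_singleton_right]
  refine prod_congr rfl fun a ha => ?_
  have hlt : a < M + 1 := mem_range.mp (hs ha)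
  have hfilter : {b ∈ range (M + 1) | a < b} = Ico (a + 1) (M + 1) := by
    ext b
    simp only [mem_filter, mem_range, mem_Ico]
    omega
  rw [gapProd_singleton_right, hfilter, prod_Ico_eq_prod_range,
    ← prod_range_add_one_eq_factorial, Nat.cast_prod]
  refine prod_congr (by congr 1; omega) fun i _ => ?_
  push_cast
  ring

theorem prod_prod_Ioi_sub_eq_gapProd {n : ℕ} {f : Fin n → ℕ} (hf : StrictAnti f) :
    ∏ i, ∏ j ∈ Ioi i, ((f i : R) - f j) = gapProd R (univ.image f) (univ.image f) := by
  rw [gapProd, prod_image fun i _ j _ h => hf.injective h]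
  refine prod_congr rfl fun i _ => ?_
  have hfilter : {b ∈ univ.image f | b < f i} = (Ioi i).image f := by
    rw [filter_image]
    congr 1
    ext j
    simp [hf.lt_iff_gt]
  rw [hfilter, prod_image fun j _ j' _ h => hf.injective h]

end GapProd

theorem stmt_1_general (M N m : ℕ)
    (l : Fin N → ℕ) (k : Fin m → ℕ)
    (hl : ∀ i j : Fin N, i < j → l j < l i)
    (hk : ∀ i j : Fin m, i < j → k j < k i)
    (hdisj : Disjoint (Finset.image l Finset.univ) (Finset.image k Finset.univ))
    (hunion : Finset.image l Finset.univ ∪ Finset.image k Finset.univ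
      = Finset.range (M + 1)) :
    (∏ i : Fin N, ∏ j ∈ Finset.Ioi i, ((l i : ℚ) - (l j : ℚ))) =
      (∏ i ∈ Finset.range (M + 1), (Nat.factorial i : ℚ)) *
        (∏ i : Fin m, ∏ j ∈ Finset.Ioi i, ((k i : ℚ) - (k j : ℚ))) /
        ∏ j : Fin m, ((Nat.factorial (k j) : ℚ) * (Nat.factorial (M - k j) : ℚ)) := by
  have hK : univ.image k ⊆ range (M + 1) := hunion ▸ subset_union_right
  have hdenom : ∏ j, ((k j)! * (M - k j)! : ℚ) =
      gapProd ℚ (univ.image k) (range (M + 1)) * gapProd ℚ (range (M + 1)) (univ.image k) := by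
    rw [gapProd_range_right hK, gapProd_range_left hK, ← prod_mul_distrib,
      prod_image fun i _ j _ h => StrictAnti.injective hk h]
  have hdenom_ne : ∏ j, ((k j)! * (M - k j)! : ℚ) ≠ 0 :=
    prod_ne_zero_iff.mpr fun j _ => by positivity
  rw [eq_div_iff hdenom_ne, hdenom, ← gapProd_range_right subset_rfl,
    prod_prod_Ioi_sub_eq_gapProd hl, prod_prod_Ioi_sub_eq_gapProd hk, ← hunion]
  simp only [gapProd_union_left hdisj, gapProd_union_right _ hdisj]
  ring

/-- For complementary strictly decreasing configurations L = (l₁>…>l_N) and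
K = (k₁>…>k_m) partitioning {0,…,M}, the Vandermonde of L equals
the superfactorial times the Vandermonde of K divided by ∏ k_j!(M-k_j)!. -/
theorem stmt_1 (M N m : ℕ) (hNm : N + m = M + 1)
    (l : Fin N → ℕ) (k : Fin m → ℕ)
    (hl : ∀ i j : Fin N, i < j → l j < l i)
    (hk : ∀ i j : Fin m, i < j → k j < k i)
    (hdisj : Disjoint (Finset.image l Finset.univ) (Finset.image k Finset.univ))
    (hunion : Finset.image l Finset.univ ∪ Finset.image k Finset.univ
      = Finset.range (M + 1)) :
    (∏ i : Fin N, ∏ j ∈ Finset.Ioi i, ((l i : ℚ) - (l j : ℚ))) =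
      (∏ i ∈ Finset.range (M + 1), (Nat.factorial i : ℚ)) *
        (∏ i : Fin m, ∏ j ∈ Finset.Ioi i, ((k i : ℚ) - (k j : ℚ))) /
        ∏ j : Fin m, ((Nat.factorial (k j) : ℚ) * (Nat.factorial (M - k j) : ℚ)) :=
  stmt_1_general M N m l k hl hk hdisj hunion
end

section
/- Define the Hahn polynomial H_n^{(a,b,M)}(y) = ∑_{p=0}^{n} [(-n)_p (n+b+a+1)_p (-y)_p] / [(b+1)_p (-M)_p p!] and the Jacobi polynomial J_n^{(a,b)}(t) = ∑_{p=0}^{n} [(-n)_p (n+b+a+1)_p / ((b+1)_p p!)] t^p, where (x)_p denotes the rising factorial. Then for all real t and all integers 0 ≤ n ≤ M: ∑_{k=0}^{M} C(M,k) t^k (1-t)^{M-k} H_n^{(a,b,M)}(k) = J_n^{(a,b)}(t). -/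
/-!
Expanding the Hahn polynomial and exchanging the sums reduces the identity to one binomial moment
for each `p ≤ n`: if `X` is binomial with parameters `M` and `t`, then the expectation of the
Pochhammer symbol `(-X)_p = (-1)^p X(X-1)⋯(X-p+1)` is `(-M)_p t^p`. This is the classical
factorial-moment formula, so the factor `(-k)_p / (-M)_p` of the `p`-th Hahn term averages to `t^p`.
-/

open Finset

/-- Rising factorial (Pochhammer symbol) (x)_p on ℝ. -/
noncomputable def poch (p : ℕ) (x : ℝ) : ℝ := (ascPochhammer ℝ p).eval x

/-- Hahn polynomial H_n^{(a,b,M)}(y) = ₃F₂(-n, n+b+a+1, -y; b+1, -M; 1). -/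
noncomputable def hahn (a b : ℝ) (M n : ℕ) (y : ℝ) : ℝ :=
  ∑ p ∈ range (n + 1),
    (poch p (-(n : ℝ)) * poch p ((n : ℝ) + b + a + 1) * poch p (-y)) /
      (poch p (b + 1) * poch p (-(M : ℝ)) * (Nat.factorial p : ℝ))

/-- Jacobi polynomial J_n^{(a,b)}(t) = ₂F₁(-n, n+b+a+1; b+1; t). -/
noncomputable def jacobi (a b : ℝ) (n : ℕ) (t : ℝ) : ℝ :=
  ∑ p ∈ range (n + 1),
    (poch p (-(n : ℝ)) * poch p ((n : ℝ) + b + a + 1)) /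
      (poch p (b + 1) * (Nat.factorial p : ℝ)) * t ^ p

theorem Nat.choose_add_mul_descFactorial (p m j : ℕ) :
    (p + m).choose (p + j) * (p + j).descFactorial p = (p + m).descFactorial p * m.choose j := by
  have h := Nat.choose_mul (n := p + m) (Nat.le_add_right p j)
  rw [Nat.add_sub_cancel_left, Nat.add_sub_cancel_left] at h
  rw [Nat.descFactorial_eq_factorial_mul_choose, Nat.descFactorial_eq_factorial_mul_choose,
    Nat.mul_left_comm, h, Nat.mul_assoc]

theorem sum_choose_mul_pow_mul_descFactorial {R : Type*} [CommRing R] (M p : ℕ) (t : R) :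
    ∑ k ∈ range (M + 1), (M.choose k : R) * t ^ k * (1 - t) ^ (M - k) *
        (k.descFactorial p : R) = (M.descFactorial p : R) * t ^ p := by
  rcases lt_or_ge M p with hMp | hpM
  · rw [Nat.descFactorial_eq_zero_iff_lt.mpr hMp, Nat.cast_zero, zero_mul]
    refine sum_eq_zero fun k hk => ?_
    have hkp : k < p := (Nat.lt_succ_iff.mp (mem_range.mp hk)).trans_lt hMp
    rw [Nat.descFactorial_eq_zero_iff_lt.mpr hkp, Nat.cast_zero, mul_zero]
  obtain ⟨m, rfl⟩ := Nat.exists_eq_add_of_le hpM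
  have below_p : ∀ k ∈ range p,
      ((p + m).choose k : R) * t ^ k * (1 - t) ^ (p + m - k) * (k.descFactorial p : R) = 0 :=
    fun k hk => by
      rw [Nat.descFactorial_eq_zero_iff_lt.mpr (mem_range.mp hk), Nat.cast_zero, mul_zero]
  have shifted : ∀ j,
      ((p + m).choose (p + j) : R) * t ^ (p + j) * (1 - t) ^ (p + m - (p + j)) *
          ((p + j).descFactorial p : R) =
        ((p + m).descFactorial p : R) * t ^ p * (t ^ j * (1 - t) ^ (m - j) * (m.choose j : R)) := by
    intro j
    have hc := congrArg (Nat.cast (R := R)) (Nat.choose_add_mul_descFactorial p m j)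
    push_cast at hc
    rw [Nat.add_sub_add_left, pow_add]
    linear_combination (t ^ p * t ^ j * (1 - t) ^ (m - j)) * hc
  rw [show p + m + 1 = p + (m + 1) by omega, sum_range_add, sum_eq_zero below_p, zero_add,
    sum_congr rfl fun j _ => shifted j, ← mul_sum, ← add_pow, add_sub_cancel, one_pow, mul_one]

theorem poch_neg_natCast (p k : ℕ) :
    poch p (-(k : ℝ)) = (-1) ^ p * (k.descFactorial p : ℝ) := by
  rw [poch, ascPochhammer_eval_neg_eq_descPochhammer, descPochhammer_eval_eq_descFactorial]

theorem poch_neg_natCast_ne_zero {p M : ℕ} (hpM : p ≤ M) : poch p (-(M : ℝ)) ≠ 0 := by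
  rw [poch_neg_natCast]
  exact mul_ne_zero (pow_ne_zero _ (by norm_num))
    (Nat.cast_ne_zero.mpr (Nat.descFactorial_eq_zero_iff_lt.not.mpr (Nat.not_lt.mpr hpM)))

theorem sum_choose_mul_pow_mul_poch_neg (M p : ℕ) (t : ℝ) :
    ∑ k ∈ range (M + 1), (M.choose k : ℝ) * t ^ k * (1 - t) ^ (M - k) * poch p (-(k : ℝ)) =
      poch p (-(M : ℝ)) * t ^ p := by
  simp_rw [poch_neg_natCast, mul_left_comm _ ((-1 : ℝ) ^ p), ← mul_sum,
    sum_choose_mul_pow_mul_descFactorial, mul_assoc]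

theorem stmt_4_general (a b : ℝ) (M : ℕ)
    (n : ℕ) (hn : n ≤ M) (t : ℝ) :
    ∑ k ∈ range (M + 1), (M.choose k : ℝ) * t ^ k * (1 - t) ^ (M - k) * hahn a b M n k =
      jacobi a b n t := by
  simp only [hahn, jacobi, mul_sum]
  rw [sum_comm]
  refine sum_congr rfl fun p hp => ?_
  have hP := poch_neg_natCast_ne_zero ((Nat.lt_succ_iff.mp (mem_range.mp hp)).trans hn)
  set c := poch p (-(n : ℝ)) * poch p ((n : ℝ) + b + a + 1)
  calc ∑ k ∈ range (M + 1), (M.choose k : ℝ) * t ^ k * (1 - t) ^ (M - k) *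
        (c * poch p (-(k : ℝ)) / (poch p (b + 1) * poch p (-(M : ℝ)) * p.factorial))
      = c / (poch p (b + 1) * poch p (-(M : ℝ)) * p.factorial) * ∑ k ∈ range (M + 1),
          (M.choose k : ℝ) * t ^ k * (1 - t) ^ (M - k) * poch p (-(k : ℝ)) := by
        rw [mul_sum]; exact sum_congr rfl fun k _ => by ring
    _ = c / (poch p (b + 1) * p.factorial) * t ^ p := by
        rw [sum_choose_mul_pow_mul_poch_neg]; field_simp

/-- Binomial averaging transforms Hahn polynomials into Jacobi polynomials. -/
theorem stmt_4 (a b : ℝ) (ha : -1 < a) (hb : -1 < b) (M : ℕ) (hM : 0 < M)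
    (n : ℕ) (hn : n ≤ M) (t : ℝ) :
    ∑ k ∈ range (M + 1), (M.choose k : ℝ) * t ^ k * (1 - t) ^ (M - k) * hahn a b M n k =
      jacobi a b n t :=
  stmt_4_general a b M n hn t
end

section
/- For m+1 symmetric polynomials φ̂₀,…,φ̂_m in variables t₁,…,t_m defined by the generating identity ∏_{i=1}^m (t_i + (1-t_i)u) = ∑_{n=0}^m φ̂_n(t₁,…,t_m) u^n, the only polynomial relation among φ̂₀,…,φ̂_m is that their sum equals 1; equivalently, the kernel of the algebra homomorphism ℂ[φ₀,…,φ_m] → ℂ[t₁,…,t_m]^{S_m} sending φ_n to φ̂_n is the principal ideal generated by φ₀+⋯+φ_m - 1. -/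
/-- The symmetric polynomials φ̂₀,…,φ̂_m in t₁,…,t_m defined by
∏ᵢ (tᵢ + (1-tᵢ)u) = ∑ₙ φ̂ₙ uⁿ: the n-th one is the coefficient of uⁿ in the product. -/
noncomputable def phiHat (m : ℕ) (n : ℕ) : MvPolynomial (Fin m) ℂ :=
  ((∏ i : Fin m, (Polynomial.C (MvPolynomial.X i) +
      Polynomial.C (1 - MvPolynomial.X i) * Polynomial.X)) :
    Polynomial (MvPolynomial (Fin m) ℂ)).coeff n

/-!
Since `tᵢ + (1 - tᵢ)u = u + tᵢ(1 - u)`, expanding the product gives `φ̂ₙ = ∑ₖ cₙₖ eₖ`, where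
`eₖ` is the `k`-th elementary symmetric polynomial and `cₙₖ` is the coefficient of `uⁿ` in
`u^(m-k) (1-u)^k`. The matrix `(cₙₖ)` is invertible, with an inverse made of binomial coefficients
because `∑ⱼ C(m-n, j) u^(m-j) (1-u)^j = uⁿ (u + (1-u))^(m-n) = uⁿ`. Hence `φₙ ↦ φ̂ₙ` is the
evaluation `φₖ ↦ eₖ` precomposed with a linear automorphism. As `e₀ = 1` and `e₁, …, e_m` are
algebraically independent, the kernel of that evaluation is `(φ₀ - 1)`, and the inverse
automorphism sends `φ₀` to `φ₀ + ⋯ + φ_m`.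
-/

open Finset Matrix MvPolynomial

theorem Finset.prod_add_mul_eq_sum_powersetCard {ι R : Type*} [CommSemiring R] (s : Finset ι)
    (f : ι → R) (a b : R) :
    ∏ i ∈ s, (a + f i * b) =
      ∑ k ∈ range (#s + 1), (∑ t ∈ powersetCard k s, ∏ i ∈ t, f i) * a ^ (#s - k) * b ^ k := by
  classical
  simp_rw [add_comm a, prod_add, sum_powerset, sum_mul]
  refine sum_congr rfl fun k _ => sum_congr rfl fun t ht => ?_
  obtain ⟨hts, rfl⟩ := mem_powersetCard.mp ht
  rw [prod_mul_distrib, prod_const, prod_const, card_sdiff_of_subset hts]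
  ring

theorem Polynomial.sum_choose_mul_X_pow_mul_one_sub_X_pow {R : Type*} [CommRing R] {m n : ℕ}
    (h : n ≤ m) :
    ∑ j ∈ range (m + 1), ((m - n).choose j : Polynomial R) * (X ^ (m - j) * (1 - X) ^ j) =
      X ^ n := by
  have hsub : range (m - n + 1) ⊆ range (m + 1) := range_subset_range.mpr (by omega)
  rw [← sum_subset hsub fun j _ hj => by
    rw [Nat.choose_eq_zero_of_lt (by simpa using hj), Nat.cast_zero, zero_mul]]
  calc _ = (X : Polynomial R) ^ n * ((1 - X) + X) ^ (m - n) := by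
        rw [add_pow, mul_sum]
        refine sum_congr rfl fun j hj => ?_
        rw [show (m - j : ℕ) = n + (m - n - j) by simp at hj; omega, pow_add]
        ring
    _ = X ^ n := by rw [sub_add_cancel, one_pow, mul_one]

theorem MvPolynomial.prod_C_X_add_C_one_sub_X_mul_X_eq_sum_esymm {σ R : Type*} [Fintype σ]
    [CommRing R] :
    (∏ i : σ, (Polynomial.C (X i) + Polynomial.C (1 - X i) * Polynomial.X) :
      Polynomial (MvPolynomial σ R)) =
      ∑ k ∈ range (Fintype.card σ + 1), Polynomial.C (esymm σ R k) *
        (Polynomial.X ^ (Fintype.card σ - k) * (1 - Polynomial.X) ^ k) := by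
  calc _ = ∏ i : σ, (Polynomial.X + Polynomial.C (X i : MvPolynomial σ R) * (1 - Polynomial.X)) :=
        prod_congr rfl fun i _ => by rw [map_sub, map_one]; ring
    _ = _ := by
        rw [prod_add_mul_eq_sum_powersetCard, card_univ]
        simp [esymm, map_sum, map_prod, mul_assoc]

namespace MvPolynomial

section LinearSubst

variable {ι R : Type*} [Fintype ι] [CommSemiring R]

noncomputable def linearSubst (M : Matrix ι ι R) : MvPolynomial ι R →ₐ[R] MvPolynomial ι R :=
  aeval fun i => ∑ j, C (M i j) * X j

@[simp]
theorem linearSubst_X (M : Matrix ι ι R) (i : ι) :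
    linearSubst M (X i) = ∑ j, C (M i j) * X j :=
  aeval_X _ _

theorem linearSubst_comp_linearSubst (M N : Matrix ι ι R) :
    (linearSubst M).comp (linearSubst N) = linearSubst (N * M) := by
  refine algHom_ext fun i => ?_
  simp only [AlgHom.comp_apply, linearSubst_X, map_sum, map_mul, algHom_C, algebraMap_eq,
    Matrix.mul_apply, mul_sum, sum_mul, ← mul_assoc]
  exact sum_comm

theorem linearSubst_one [DecidableEq ι] : linearSubst (1 : Matrix ι ι R) = AlgHom.id R _ := by
  refine algHom_ext fun i => ?_
  simp [Matrix.one_apply, apply_ite C]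

end LinearSubst

noncomputable def linearSubstEquiv {ι R : Type*} [Fintype ι] [DecidableEq ι] [CommRing R]
    (M N : Matrix ι ι R) (h : M * N = 1) : MvPolynomial ι R ≃ₐ[R] MvPolynomial ι R :=
  AlgEquiv.ofAlgHom (linearSubst M) (linearSubst N)
    (by rw [linearSubst_comp_linearSubst, mul_eq_one_comm.mp h, linearSubst_one])
    (by rw [linearSubst_comp_linearSubst, h, linearSubst_one])

/-- Through `finSuccEquiv`, `aeval f` is evaluation of the variable `X 0` at `c` followed by the
injective map `aeval (f ∘ Fin.succ)`, and the kernel of evaluation at `c` is `(X - c)`. -/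
theorem ker_aeval_eq_span_X_zero_sub_C {R A : Type*} [CommRing R] [CommRing A] [Algebra R A]
    {n : ℕ} (f : Fin (n + 1) → A) (c : R) (h0 : f 0 = algebraMap R A c)
    (hinj : Function.Injective (aeval (R := R) fun i : Fin n => f i.succ)) :
    RingHom.ker (aeval (R := R) f) = Ideal.span {X 0 - C c} := by
  set ψ := aeval (R := R) fun i : Fin n => f i.succ
  set φ : MvPolynomial (Fin (n + 1)) R →+* MvPolynomial (Fin n) R :=
    (Polynomial.evalRingHom (C c)).comp
      (finSuccEquiv R n : MvPolynomial (Fin (n + 1)) R →+* Polynomial (MvPolynomial (Fin n) R))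
  have hfac : (aeval (R := R) f : MvPolynomial (Fin (n + 1)) R →+* A) =
      (ψ : MvPolynomial (Fin n) R →+* A).comp φ := by
    refine ringHom_ext (fun r => ?_) fun i => ?_
    · simp [φ, finSuccEquiv_apply]
    · cases i using Fin.cases <;> simp [φ, h0, ψ, finSuccEquiv_X_zero, finSuccEquiv_X_succ]
  have hgen : finSuccEquiv R n (X 0 - C c) = Polynomial.X - Polynomial.C (C c) := by
    simp [finSuccEquiv_apply]
  calc RingHom.ker (aeval (R := R) f)
      = RingHom.ker φ := by
        rw [← RingHom.ker_coe_toRingHom, hfac,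
          RingHom.ker_comp_of_injective _ (f := (ψ : MvPolynomial (Fin n) R →+* A)) hinj]
    _ = (Ideal.span {Polynomial.X - Polynomial.C (C c)}).comap (finSuccEquiv R n) := by
        rw [← RingHom.comap_ker, Polynomial.ker_evalRingHom]
        rfl
    _ = Ideal.span {X 0 - C c} := by
        rw [← hgen, ← Set.image_singleton, ← Ideal.map_span,
          Ideal.comap_map_of_bijective _ (finSuccEquiv R n).bijective]

theorem ker_aeval_esymm (R : Type*) [CommRing R] (m : ℕ) :
    RingHom.ker (aeval (R := R) fun k : Fin (m + 1) => esymm (Fin m) R k) =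
      Ideal.span {X 0 - C 1} := by
  refine ker_aeval_eq_span_X_zero_sub_C _ 1 (by simp [esymm_zero]) fun p q hpq =>
    esymmAlgHom_fin_injective R le_rfl (Subtype.ext ?_)
  simpa [esymmAlgHom_apply] using hpq

end MvPolynomial

section PhiHatMatrix

variable (R : Type*) [CommRing R] (m : ℕ)

noncomputable def phiHatMatrix : Matrix (Fin (m + 1)) (Fin (m + 1)) R :=
  fun n k => ((Polynomial.X : Polynomial R) ^ (m - k) * (1 - Polynomial.X) ^ (k : ℕ)).coeff n

def binomialMatrix : Matrix (Fin (m + 1)) (Fin (m + 1)) R :=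
  fun n k => ((m - n : ℕ).choose k : R)

theorem binomialMatrix_mul_transpose_phiHatMatrix :
    binomialMatrix R m * (phiHatMatrix R m)ᵀ = 1 := by
  ext n k
  have h := congrArg (Polynomial.coeff · k)
    (Polynomial.sum_choose_mul_X_pow_mul_one_sub_X_pow (R := R) (Nat.lt_succ_iff.mp n.isLt))
  simp only [Polynomial.finsetSum_coeff, Polynomial.coeff_natCast_mul, Polynomial.coeff_X_pow,
    Finset.sum_range] at h
  simp only [Matrix.mul_apply, transpose_apply, binomialMatrix, phiHatMatrix, h, Matrix.one_apply]
  simp [Fin.ext_iff, eq_comm]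

theorem phiHatMatrix_mul_transpose_binomialMatrix :
    phiHatMatrix R m * (binomialMatrix R m)ᵀ = 1 := by
  simpa using congrArg Matrix.transpose (binomialMatrix_mul_transpose_phiHatMatrix R m)

end PhiHatMatrix

theorem phiHat_eq_sum_smul_esymm (m : ℕ) (n : Fin (m + 1)) :
    phiHat m n = ∑ k, phiHatMatrix ℂ m n k • esymm (Fin m) ℂ k := by
  rw [phiHat, prod_C_X_add_C_one_sub_X_mul_X_eq_sum_esymm, Fintype.card_fin,
    Polynomial.finsetSum_coeff, ← Fin.sum_univ_eq_sum_range]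
  refine sum_congr rfl fun k _ => ?_
  have hmap : (Polynomial.X ^ (m - k) * (1 - Polynomial.X) ^ (k : ℕ) :
      Polynomial (MvPolynomial (Fin m) ℂ)) =
      (Polynomial.X ^ (m - k) * (1 - Polynomial.X) ^ (k : ℕ) : Polynomial ℂ).map
        (algebraMap ℂ _) := by
    simp
  rw [Polynomial.coeff_C_mul, hmap, Polynomial.coeff_map, Algebra.smul_def, mul_comm]
  rfl

theorem aeval_phiHat_eq_comp_linearSubst (m : ℕ) :
    aeval (fun n : Fin (m + 1) => phiHat m n) =
      (aeval fun k : Fin (m + 1) => esymm (Fin m) ℂ k).comp (linearSubst (phiHatMatrix ℂ m)) :=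
  algHom_ext fun n => by simp [phiHat_eq_sum_smul_esymm, Algebra.smul_def]

theorem stmt_9_general (m : ℕ) :
    RingHom.ker (MvPolynomial.aeval (R := ℂ)
        (fun n : Fin (m + 1) => phiHat m (n : ℕ))).toRingHom =
      Ideal.span
        {(∑ n : Fin (m + 1), MvPolynomial.X n : MvPolynomial (Fin (m + 1)) ℂ) - 1} := by
  let e := linearSubstEquiv _ _ (phiHatMatrix_mul_transpose_binomialMatrix ℂ m)
  have he : e (∑ n, X n - 1) = X 0 - C 1 := by
    rw [← e.eq_symm_apply]
    simp [e, linearSubstEquiv, binomialMatrix]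
  rw [AlgHom.toRingHom_eq_coe, aeval_phiHat_eq_comp_linearSubst, RingHom.ker_coe_toRingHom,
    ← AlgHom.comap_ker, ker_aeval_esymm, ← he, ← Set.image_singleton, ← Ideal.map_span]
  exact Ideal.comap_map_of_bijective _ e.bijective

/-- The only polynomial relation among φ̂₀,…,φ̂_m is that their sum equals 1:
the kernel of φₙ ↦ φ̂ₙ is the principal ideal (φ₀+⋯+φ_m − 1). -/
theorem stmt_9 (m : ℕ) (hm : 1 ≤ m) :
    RingHom.ker (MvPolynomial.aeval (R := ℂ)
        (fun n : Fin (m + 1) => phiHat m (n : ℕ))).toRingHom =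
      Ideal.span
        {(∑ n : Fin (m + 1), MvPolynomial.X n : MvPolynomial (Fin (m + 1)) ℂ) - 1} :=
  stmt_9_general m
end

section
/- For signatures μ ∈ ℤ^N and λ ∈ ℤ^{N+1} (weakly decreasing), the branching of rational Schur functions satisfies the Gelfand–Tsetlin rule: s_λ(u₁,…,u_N, v) = ∑_{μ ≺ λ} s_μ(u₁,…,u_N) · v^{|λ|-|μ|}, where μ ≺ λ means λ_i ≥ μ_i ≥ λ_{i+1} for i = 1,…,N, and |λ| = ∑λ_i, |μ| = ∑μ_i. -/
open Finset

/-- Rational Schur function s_λ(u₁,…,u_n) = det[uᵢ^{λ_j+n-j}] / ∏_{i<j}(uᵢ-u_j). -/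
noncomputable def schur {n : ℕ} (lam : Fin n → ℤ) (u : Fin n → ℂ) : ℂ :=
  (Matrix.det (Matrix.of fun i j : Fin n => u i ^ (lam j + (n : ℤ) - 1 - (j : ℤ)))) /
    ∏ i : Fin n, ∏ j ∈ Finset.Ioi i, (u i - u j)

/-!
Put `v = w (last N)` and `uᵢ = w (castSucc i)`. Subtracting `v^(λⱼ - λⱼ₊₁ + 1)` times column
`j + 1` from column `j` of the alternant `det[wᵢ^(λⱼ + N - j)]` clears its last row except for the
corner entry `v^(λ_N)`. With `sⱼ = N - 1 - j`, the remaining `N × N` block has entries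
`uᵢ^(λⱼ + 1 + sⱼ) - v^(λⱼ + 1 - λⱼ₊₁) uᵢ^(λⱼ₊₁ + sⱼ) = (uᵢ - v) ∑_{λⱼ₊₁ ≤ m ≤ λⱼ} v^(λⱼ - m) uᵢ^(m + sⱼ)`,
so multilinearity in the columns turns its determinant into `∏ᵢ (uᵢ - v)` times the sum over
`μ ≺ λ` of `v^(∑ⱼ (λⱼ - μⱼ)) det[uᵢ^(μⱼ + sⱼ)]`. The factor `∏ᵢ (uᵢ - v)` is exactly what
the Vandermonde product in `N + 1` variables has on top of the one in `N` variables.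
-/

theorem Finset.prod_zpow_eq_zpow_sum₀ {ι G : Type*} [CommGroupWithZero G] (s : Finset ι)
    (f : ι → ℤ) {a : G} (ha : a ≠ 0) : ∏ i ∈ s, a ^ f i = a ^ ∑ i ∈ s, f i := by
  induction s using Finset.cons_induction with
  | empty => simp
  | cons i s hi ih => rw [prod_cons, sum_cons, ih, zpow_add₀ ha]

namespace Matrix

variable {R : Type*} [CommRing R]

theorem det_of_lastCases_sub_mul_succ {N : ℕ} (A : Matrix (Fin (N + 1)) (Fin (N + 1)) R)
    (c : Fin N → R) :
    (of fun i j => Fin.lastCases (A i (Fin.last N))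
      (fun j => A i j.castSucc - c j * A i j.succ) j).det = A.det := by
  let T : Matrix (Fin (N + 1)) (Fin (N + 1)) R := of fun k j => Fin.lastCases
    (if k = Fin.last N then 1 else 0)
    (fun j => (if k = j.castSucc then 1 else 0) - c j * if k = j.succ then 1 else 0) j
  have hT : T.det = 1 := by
    rw [det_of_isLowerTriangular T]
    · refine prod_eq_one fun j _ => ?_
      induction j using Fin.lastCases <;> simp [T, Fin.castSucc_lt_succ.ne]
    · intro i j (hij : i < j)
      induction j using Fin.lastCases with
      | last => simp [T, hij.ne]
      | cast j => simp [T, hij.ne, (hij.trans Fin.castSucc_lt_succ).ne]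
  have hAT : A * T = of fun i j => Fin.lastCases (A i (Fin.last N))
      (fun j => A i j.castSucc - c j * A i j.succ) j := by
    ext i j
    induction j using Fin.lastCases <;> simp [T, mul_apply, mul_sub, sum_sub_distrib, mul_comm]
  rw [← hAT, det_mul, hT, mul_one]

theorem det_eq_mul_det_submatrix_castSucc {N : ℕ} (A : Matrix (Fin (N + 1)) (Fin (N + 1)) R)
    (h : ∀ j : Fin N, A (Fin.last N) j.castSucc = 0) :
    A.det = A (Fin.last N) (Fin.last N) * (A.submatrix Fin.castSucc Fin.castSucc).det := by
  rw [det_succ_row A (Fin.last N), Fin.sum_univ_castSucc]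
  simp [h, ← Nat.two_mul]

theorem det_of_sum_col {n ι : Type*} [Fintype n] [DecidableEq n] (s : n → Finset ι)
    (f : n → ι → n → R) :
    (of fun i j => ∑ m ∈ s j, f j m i).det
      = ∑ r ∈ Fintype.piFinset s, (of fun i j => f j (r j) i).det := by
  rw [← det_transpose]
  have := (detRowAlternating : (n → R) [⋀^n]→ₗ[R] R).toMultilinearMap.map_sum_finset f s
  simp only [AlternatingMap.coe_multilinearMap] at this
  convert this using 1
  · congr 1; ext j i; simp
  · refine sum_congr rfl fun r _ => ?_
    rw [← det_transpose]; rfl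

end Matrix

theorem Fin.prod_Ioi_sub_castSucc {R : Type*} [CommRing R] {N : ℕ} (w : Fin (N + 1) → R) :
    ∏ i : Fin (N + 1), ∏ j ∈ Ioi i, (w i - w j)
      = (∏ i : Fin N, ∏ j ∈ Ioi i, (w i.castSucc - w j.castSucc))
          * ∏ i : Fin N, (w i.castSucc - w (Fin.last N)) := by
  rw [Fin.prod_univ_castSucc, Ioi_eq_empty.2 fun _ _ => Fin.le_last _, prod_empty, mul_one,
    ← prod_mul_distrib]
  refine prod_congr rfl fun i _ => ?_
  rw [Ioi_eq_Ioc, Fin.top_eq_last, ← Ioo_insert_right (Fin.castSucc_lt_last i),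
    ← Fin.map_castSuccEmb_Ioi, prod_insert (by simp), prod_map, mul_comm]
  rfl

section

variable {K : Type*} [Field K]

theorem sub_mul_sum_Icc_zpow_mul_zpow {u v : K} (hu : u ≠ 0) (hv : v ≠ 0) {q p : ℤ}
    (hqp : q ≤ p) (s : ℤ) :
    (u - v) * ∑ m ∈ Icc q p, v ^ (p - m) * u ^ (m + s)
      = u ^ (p + 1 + s) - v ^ (p + 1 - q) * u ^ (q + s) := by
  induction p, hqp using Int.leInduction with
  | base => simp [add_right_comm q 1 s, zpow_add_one₀ hu]; ring
  | succ p hqp ih =>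
    have hshift : ∑ m ∈ Icc q p, v ^ (p + 1 - m) * u ^ (m + s)
        = v * ∑ m ∈ Icc q p, v ^ (p - m) * u ^ (m + s) := by
      rw [mul_sum]
      refine sum_congr rfl fun m _ => ?_
      rw [show p + 1 - m = p - m + 1 by ring, zpow_add_one₀ hv]
      ring
    rw [← insert_Icc_right_eq_Icc_add_one (by omega), sum_insert (by simp), mul_add, hshift,
      mul_left_comm (u - v) v, ih, sub_self, zpow_zero, show p + 1 + 1 - q = p + 1 - q + 1 by ring,
      zpow_add_one₀ hv, add_right_comm (p + 1) 1 s, zpow_add_one₀ hu (p + 1 + s)]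
    ring

theorem det_zpow_sub_zpow_eq_sum {N : ℕ} {p q : Fin N → ℤ} (hqp : q ≤ p) (s : Fin N → ℤ)
    {u : Fin N → K} {v : K} (hu : ∀ i, u i ≠ 0) (hv : v ≠ 0) :
    (Matrix.of fun i j => u i ^ (p j + 1 + s j) - v ^ (p j + 1 - q j) * u i ^ (q j + s j)).det
      = (∏ i, (u i - v)) * ∑ mu ∈ Icc q p,
          v ^ (∑ j, (p j - mu j)) * (Matrix.of fun i j => u i ^ (mu j + s j)).det := by
  have hcol : ∀ i j, u i ^ (p j + 1 + s j) - v ^ (p j + 1 - q j) * u i ^ (q j + s j)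
      = ∑ m ∈ Icc (q j) (p j), (u i - v) * (v ^ (p j - m) * u i ^ (m + s j)) := fun i j => by
    rw [← mul_sum, sub_mul_sum_Icc_zpow_mul_zpow (hu i) hv (hqp j)]
  simp_rw [hcol, Matrix.det_of_sum_col, ← Pi.Icc_eq, mul_sum]
  refine sum_congr rfl fun mu _ => ?_
  rw [← prod_zpow_eq_zpow_sum₀ _ _ hv, ← Matrix.det_mul_row, ← Matrix.det_mul_column]
  rfl

def alternant {n : ℕ} (lam : Fin n → ℤ) (u : Fin n → K) : Matrix (Fin n) (Fin n) K :=
  Matrix.of fun i j => u i ^ (lam j + (n : ℤ) - 1 - (j : ℤ))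

theorem det_alternant_eq_zpow_mul_det {N : ℕ} (lam : Fin (N + 1) → ℤ) (w : Fin (N + 1) → K)
    (hv : w (Fin.last N) ≠ 0) :
    (alternant lam w).det = w (Fin.last N) ^ lam (Fin.last N) *
      (Matrix.of fun i j : Fin N =>
        w i.castSucc ^ (lam j.castSucc + 1 + ((N : ℤ) - 1 - j))
          - w (Fin.last N) ^ (lam j.castSucc + 1 - lam j.succ)
            * w i.castSucc ^ (lam j.succ + ((N : ℤ) - 1 - j))).det := by
  have h_castSucc (i : Fin (N + 1)) (j : Fin N) : alternant lam w i j.castSucc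
      = w i ^ (lam j.castSucc + 1 + ((N : ℤ) - 1 - j)) := by
    simp only [alternant, Matrix.of_apply, Fin.val_castSucc]; push_cast; ring_nf
  have h_succ (i : Fin (N + 1)) (j : Fin N) : alternant lam w i j.succ
      = w i ^ (lam j.succ + ((N : ℤ) - 1 - j)) := by
    simp only [alternant, Matrix.of_apply, Fin.val_succ]; push_cast; ring_nf
  have h_last : alternant lam w (Fin.last N) (Fin.last N) = w (Fin.last N) ^ lam (Fin.last N) := by
    simp only [alternant, Matrix.of_apply, Fin.val_last]; push_cast; ring_nf
  rw [← Matrix.det_of_lastCases_sub_mul_succ (alternant lam w)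
      (fun j => w (Fin.last N) ^ (lam j.castSucc + 1 - lam j.succ)),
    Matrix.det_eq_mul_det_submatrix_castSucc]
  · simp only [Matrix.of_apply, Fin.lastCases_last, h_last, h_castSucc, h_succ]
    congr 2
    ext i j
    simp only [Matrix.submatrix_apply, Matrix.of_apply, Fin.lastCases_castSucc]
  · intro j
    simp only [Matrix.of_apply, Fin.lastCases_castSucc, h_castSucc, h_succ]
    rw [← zpow_add₀ hv, sub_eq_zero]
    ring_nf

theorem det_alternant_eq_mul_sum {N : ℕ} {lam : Fin (N + 1) → ℤ} (hlam : Antitone lam)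
    {w : Fin (N + 1) → K} (hw : ∀ i, w i ≠ 0) :
    (alternant lam w).det = (∏ i : Fin N, (w i.castSucc - w (Fin.last N))) *
      ∑ mu ∈ Icc (fun i : Fin N => lam i.succ) (fun i : Fin N => lam i.castSucc),
        (alternant mu (w ∘ Fin.castSucc)).det * w (Fin.last N) ^ ((∑ i, lam i) - ∑ i, mu i) := by
  rw [det_alternant_eq_zpow_mul_det lam w (hw _),
    det_zpow_sub_zpow_eq_sum (fun j => hlam (Fin.castSucc_le_succ j)) _ (fun _ => hw _) (hw _),
    mul_left_comm, mul_sum]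
  congr 1
  refine sum_congr rfl fun mu _ => ?_
  have halt : (Matrix.of fun i j : Fin N => w i.castSucc ^ (mu j + ((N : ℤ) - 1 - j)))
      = alternant mu (w ∘ Fin.castSucc) := by
    ext i j
    simp only [alternant, Matrix.of_apply, Function.comp_apply]
    ring_nf
  have hsum : lam (Fin.last N) + ∑ j : Fin N, (lam j.castSucc - mu j)
      = (∑ i, lam i) - ∑ i, mu i := by
    rw [Fin.sum_univ_castSucc lam, sum_sub_distrib]
    ring
  rw [halt, ← mul_assoc, ← zpow_add₀ (hw _), hsum, mul_comm]

end

/-- Gelfand–Tsetlin branching rule: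
s_λ(u₁,…,u_N,v) = ∑_{μ ≺ λ} s_μ(u₁,…,u_N) v^{|λ|-|μ|}, where μ ≺ λ means
λᵢ ≥ μᵢ ≥ λ_{i+1}. -/
theorem stmt_13 (N : ℕ) (lam : Fin (N + 1) → ℤ) (hlam : Antitone lam)
    (w : Fin (N + 1) → ℂ) (hw0 : ∀ i, w i ≠ 0) (hinj : Function.Injective w) :
    schur lam w =
      ∑ mu ∈ Finset.Icc (fun i : Fin N => lam i.succ) (fun i : Fin N => lam i.castSucc),
        schur mu (w ∘ Fin.castSucc) *
          (w (Fin.last N)) ^ ((∑ i, lam i) - ∑ i, mu i) := by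
  have hP : ∏ i : Fin N, (w i.castSucc - w (Fin.last N)) ≠ 0 :=
    prod_ne_zero_iff.2 fun i _ => sub_ne_zero.2 (hinj.ne (Fin.castSucc_lt_last i).ne)
  calc schur lam w
      = (alternant lam w).det / ((∏ i : Fin N, ∏ j ∈ Ioi i, (w i.castSucc - w j.castSucc))
          * ∏ i : Fin N, (w i.castSucc - w (Fin.last N))) := by
        rw [schur, Fin.prod_Ioi_sub_castSucc]; rfl
    _ = _ := by
        rw [det_alternant_eq_mul_sum hlam hw0, mul_comm _ (∏ i : Fin N, _),
          mul_div_mul_left _ _ hP, sum_div]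
        refine sum_congr rfl fun mu _ => ?_
        rw [schur, div_mul_eq_mul_div]
        rfl
end

section
/- Let R be the algebra of formal power series of bounded degree in variables φ_n (n ∈ ℤ), each of degree 1, and let φ = ∑_{n∈ℤ} φ_n ∈ R. Then for every N ≥ 0, the intersection of the principal ideal J = (φ - 1) with the N-th homogeneous component R_N is zero. -/
/-!
If `ψ ≠ 0`, let `ψ_k` be its top nonzero homogeneous component. Since `φ - 1` has nonzero
constant term, `(φ - 1) ψ` has the same order as `ψ`, so homogeneity of `(φ - 1) ψ` in degree `N`
forces `N ≤ order ψ ≤ k`. As `φ` is homogeneous of degree one, the component of `(φ - 1) ψ` of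
degree `k + 1` is `φ ψ_k`, which is nonzero because power series over `ℂ` have no zero divisors;
but `k + 1 ≠ N`. Hence `ψ = 0`.
-/

open Classical in
/-- The element φ = ∑_{n∈ℤ} φₙ of the algebra R of formal power series in the
variables φₙ (n ∈ ℤ): the series whose coefficient is 1 on each degree-one
monomial φₙ and 0 elsewhere. -/
noncomputable def phiSeries : MvPowerSeries ℤ ℂ :=
  fun d => if ∃ n : ℤ, d = Finsupp.single n 1 then 1 else 0

namespace MvPowerSeries

open Finsupp

variable {σ R : Type*} [Semiring R]

theorem homogeneousComponent_eq_zero {f : MvPowerSeries σ R} {k : ℕ}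
    (hf : ∀ d, degree d = k → coeff d f = 0) : homogeneousComponent k f = 0 := by
  ext d
  rw [coeff_homogeneousComponent, map_zero]
  split_ifs with hd
  exacts [hf d hd, rfl]

theorem order_le_of_homogeneousComponent_ne_zero {f : MvPowerSeries σ R} {k : ℕ}
    (hk : homogeneousComponent k f ≠ 0) : f.order ≤ k :=
  not_lt.mp (mt homogeneousComponent_of_lt_order_eq_zero hk)

theorem IsHomogeneous.homogeneousComponent_add_mul {p : MvPowerSeries σ R} {m : ℕ}
    (hp : p.IsHomogeneous m) (k : ℕ) (f : MvPowerSeries σ R) :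
    homogeneousComponent (m + k) (p * f) = p * homogeneousComponent k f := by
  classical
  ext d
  rw [coeff_homogeneousComponent]
  split_ifs with hd
  · rw [coeff_mul, coeff_mul]
    refine Finset.sum_congr rfl fun x hx => ?_
    rw [coeff_homogeneousComponent]
    by_cases hx1 : degree x.1 = m
    · have hx2 : degree x.2 = k := by
        rw [← Finset.HasAntidiagonal.mem_antidiagonal.mp hx, map_add, hx1] at hd
        omega
      rw [if_pos hx2]
    · rw [hp.coeff_eq_zero hx1, zero_mul, zero_mul]
  · have hpf : (p * homogeneousComponent k f).IsHomogeneous (m + k) :=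
      hp.mul (isHomogeneous_homogeneousComponent f k)
    exact (hpf.coeff_eq_zero hd).symm

theorem exists_max_homogeneousComponent_ne_zero {f : MvPowerSeries σ R} (hf : f ≠ 0)
    {D : ℕ} (hD : ∀ d, D < degree d → coeff d f = 0) :
    ∃ k, homogeneousComponent k f ≠ 0 ∧ ∀ j, k < j → homogeneousComponent j f = 0 := by
  classical
  have hvanish : ∀ j, D < j → homogeneousComponent j f = 0 := fun j hj =>
    homogeneousComponent_eq_zero fun d hd => hD d (hd ▸ hj)
  obtain ⟨d, hd⟩ : ∃ d, coeff d f ≠ 0 := by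
    by_contra! h
    exact hf (ext h)
  have hd' : homogeneousComponent (degree d) f ≠ 0 := fun h => hd <| by
    simpa [coeff_homogeneousComponent] using congrArg (coeff d) h
  refine ⟨Nat.findGreatest (fun k => homogeneousComponent k f ≠ 0) D,
    Nat.findGreatest_spec (P := fun k => homogeneousComponent k f ≠ 0)
      (not_lt.mp fun h => hd' (hvanish _ h)) hd', fun j hj => ?_⟩
  by_contra hj'
  exact Nat.findGreatest_is_greatest hj (not_lt.mp fun h => hj' (hvanish j h)) hj'

end MvPowerSeries

open MvPowerSeries Finsupp

open Classical in
theorem coeff_phiSeries (d : ℤ →₀ ℕ) :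
    coeff d phiSeries = if ∃ n : ℤ, d = single n 1 then 1 else 0 :=
  rfl

theorem phiSeries_isHomogeneous : phiSeries.IsHomogeneous 1 := by
  classical
  intro d hd
  rw [coeff_phiSeries] at hd
  obtain ⟨n, rfl⟩ := (ite_ne_right_iff.mp hd).1
  simp [weight_apply]

theorem phiSeries_ne_zero : phiSeries ≠ 0 := by
  intro h
  have h0 := congrArg (coeff (single 0 1)) h
  rw [coeff_phiSeries, if_pos ⟨0, rfl⟩, map_zero] at h0
  exact one_ne_zero h0

theorem order_phiSeries_sub_one : (phiSeries - 1).order = 0 := by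
  by_contra h
  have h0 := order_ne_zero_iff_constCoeff_eq_zero.mp h
  rw [map_sub, map_one, ← coeff_zero_eq_constantCoeff_apply, coeff_phiSeries, if_neg] at h0
  · simp at h0
  · rintro ⟨n, hn⟩
    simpa using congrArg (fun d => d n) hn

/-- For every N ≥ 0, the intersection of the principal ideal J = (φ - 1)
with the N-th homogeneous component R_N of R (the algebra of formal power
series of bounded degree in the φₙ) is zero: if ψ has bounded degree and
(φ-1)ψ is homogeneous of degree N, then (φ-1)ψ = 0. -/
theorem stmt_16 (N : ℕ) (ψ : MvPowerSeries ℤ ℂ)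
    (hψ : ∃ D : ℕ, ∀ d : ℤ →₀ ℕ, D < d.sum (fun _ k => k) →
      MvPowerSeries.coeff d ψ = 0)
    (hhom : ∀ d : ℤ →₀ ℕ, d.sum (fun _ k => k) ≠ N →
      MvPowerSeries.coeff d ((phiSeries - 1) * ψ) = 0) :
    (phiSeries - 1) * ψ = 0 := by
  suffices ψ = 0 by rw [this, mul_zero]
  by_contra hψ0
  obtain ⟨D, hD⟩ := hψ
  obtain ⟨k, hk, htop⟩ := exists_max_homogeneousComponent_ne_zero hψ0 hD
  have hNk : N ≤ k := by
    have hN : (N : ℕ∞) ≤ ((phiSeries - 1) * ψ).order := nat_le_order fun d hd => hhom d hd.ne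
    rw [order_mul, order_phiSeries_sub_one, zero_add] at hN
    exact_mod_cast hN.trans (order_le_of_homogeneousComponent_ne_zero hk)
  have htop_mul : homogeneousComponent (k + 1) ((phiSeries - 1) * ψ)
      = phiSeries * homogeneousComponent k ψ := by
    rw [sub_mul, one_mul, map_sub, add_comm, phiSeries_isHomogeneous.homogeneousComponent_add_mul,
      htop (1 + k) (by omega), sub_zero]
  have htop_zero : homogeneousComponent (k + 1) ((phiSeries - 1) * ψ) = 0 :=
    homogeneousComponent_eq_zero fun d hd => hhom d (show degree d ≠ N by omega)
  exact mul_ne_zero phiSeries_ne_zero hk (htop_mul ▸ htop_zero)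
end
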